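/- Each action of MMA⁻ (actions (1), (3), (4), (5), (5')) preserves the set of unifiers: if the finite equation set E' is obtained from E by one such action, then a substitution θ is a unifier of E if and only if θ is a unifier of E'. -/

import Mathlib

/-! # First-order terms, substitutions, unification -/

inductive Term (F : Type) (V : Type) : Type
  | var : V → Term F V
  | app : F → List (Term F V) → Term F V

namespace Term

variable {F V : Type}

/-- The variable `v` occurs in the term. -/
inductive VarIn (v : V) : Term F V → Prop
  | var : VarIn v (Term.var v)
  | app {f : F} {ts : List (Term F V)} {t : Term F V} :
      t ∈ ts → VarIn v t → VarIn v (Term.app f ts)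

/-- A term is ground if it contains no variables. -/
def Ground (t : Term F V) : Prop := ∀ v, ¬ VarIn v t

/-- Application of a substitution (a map from variables to terms) to a term. -/
def subst (σ : V → Term F V) : Term F V → Term F V
  | var x => σ x
  | app f ts => app f (ts.attach.map fun ⟨t, _⟩ => t.subst σ)

/-- Number of occurrences of the variable `v` in a term. -/
def count [DecidableEq V] (v : V) : Term F V → ℕ
  | var x => if x = v then 1 else 0
  | app _ ts => (ts.attach.map fun ⟨t, _⟩ => t.count v).sum

/-- A term (or atom) is linear if no variable occurs in it more than once. -/
def Linear [DecidableEq V] (t : Term F V) : Prop := ∀ v, count v t ≤ 1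

def IsVar : Term F V → Prop
  | var _ => True
  | app _ _ => False

end Term

/-- A substitution. -/
abbrev Subst (F V : Type) := V → Term F V

/-- Composition of substitutions: `(σ.comp η)` is `ση`. -/
def Subst.comp {F V : Type} (σ η : Subst F V) : Subst F V := fun v => (σ v).subst η

/-- The substitution `{X/t}`. -/
def subst1 {F V : Type} [DecidableEq V] (X : V) (t : Term F V) : Subst F V :=
  fun v => if v = X then t else Term.var v

variable {F V : Type}

/-- `σ` unifies the two terms (or atoms) `A` and `H`. -/
def IsUnifierPair (σ : Subst F V) (A H : Term F V) : Prop := A.subst σ = H.subst σ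

/-- `σ` is a most general unifier of `A` and `H`. -/
def IsMGUPair (σ : Subst F V) (A H : Term F V) : Prop :=
  IsUnifierPair σ A H ∧ ∀ τ, IsUnifierPair τ A H → ∃ η, τ = σ.comp η

/-- An equation between terms. -/
abbrev Eqn (F V : Type) := Term F V × Term F V

/-- A set of equations. -/
abbrev EqSet (F V : Type) := Set (Eqn F V)

def Eqn.subst (σ : Subst F V) (e : Eqn F V) : Eqn F V := (e.1.subst σ, e.2.subst σ)

/-- `σ` is a unifier of the equation set `E`. -/
def IsUnifier (σ : Subst F V) (E : EqSet F V) : Prop := ∀ e ∈ E, e.1.subst σ = e.2.subst σ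

def Unifiable (E : EqSet F V) : Prop := ∃ σ, IsUnifier σ E

/-- `σ` is a most general unifier of the equation set `E`. -/
def IsMGU (σ : Subst F V) (E : EqSet F V) : Prop :=
  IsUnifier σ E ∧ ∀ τ, IsUnifier τ E → ∃ η, τ = σ.comp η

/-! # The Martelli–Montanari algorithm (MMA) and its occur-check-less version MMA⁻ -/

/-- The variable `X` occurs in the equation `e`. -/
def occursInEqn (X : V) (e : Eqn F V) : Prop := Term.VarIn X e.1 ∨ Term.VarIn X e.2

/-- The variable `X` occurs in equations of `E` other than `e`. -/
def occursElsewhere (X : V) (e : Eqn F V) (E : EqSet F V) : Prop :=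
  ∃ e' ∈ E, e' ≠ e ∧ occursInEqn X e'

/-- Action (2) of MMA is applicable: `E` contains a clash `f(s₁,…,sₘ) = g(t₁,…,tₙ)`
(distinct function symbols; in a signature with arities, the same name with different
numbers of arguments also counts as distinct symbols). -/
def Clash (E : EqSet F V) : Prop :=
  ∃ f ss g ts, (Term.app f ss, Term.app g ts) ∈ E ∧ (f ≠ g ∨ ss.length ≠ ts.length)

/-- Action (6) of MMA (the occur-check failure) is applicable to `E`. -/
def OccApplicable (E : EqSet F V) : Prop :=
  ∃ X t, (Term.var X, t) ∈ E ∧ Term.var X ≠ t ∧ Term.VarIn X t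

/-- A (non-failing) step of MMA: actions (1), (3), (4), (5). -/
inductive MMAStep [DecidableEq V] : EqSet F V → EqSet F V → Prop
  | decomp {E : EqSet F V} {f : F} {ss ts : List (Term F V)} :
      (Term.app f ss, Term.app f ts) ∈ E → ss.length = ts.length →
      MMAStep E ((E \ {(Term.app f ss, Term.app f ts)}) ∪ {e | e ∈ ss.zip ts})
  | del {E : EqSet F V} {X : V} : (Term.var X, Term.var X) ∈ E →
      MMAStep E (E \ {(Term.var X, Term.var X)})
  | orient {E : EqSet F V} {X : V} {t : Term F V} : (t, Term.var X) ∈ E → ¬ t.IsVar →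
      MMAStep E ((E \ {(t, Term.var X)}) ∪ {(Term.var X, t)})
  | elim {E : EqSet F V} {X : V} {t : Term F V} :
      (Term.var X, t) ∈ E → Term.var X ≠ t → ¬ Term.VarIn X t →
      occursElsewhere X (Term.var X, t) E →
      MMAStep E (insert (Term.var X, t) (Eqn.subst (subst1 X t) '' (E \ {(Term.var X, t)})))

/-- `E'` is reachable from `E` by (non-failing) MMA steps. -/
def MMAReach [DecidableEq V] (E E' : EqSet F V) : Prop := Relation.ReflTransGen MMAStep E E'

/-- `E` is not subject to occur-check: no run of MMA on `E` performs action (6),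
i.e. action (6) is not applicable to any equation set reachable by MMA from `E`. -/
def NSTO [DecidableEq V] (E : EqSet F V) : Prop :=
  ∀ E', MMAReach E E' → ¬ OccApplicable E'

/-- A solved equation set: `X₁=t₁, …, Xₙ=tₙ` with `X₁,…,Xₙ` distinct variables
none of which occurs in any `tᵢ`. -/
def SolvedSet (E : EqSet F V) : Prop :=
  (∀ e ∈ E, ∃ X, e.1 = Term.var X) ∧
  (∀ e ∈ E, ∀ e' ∈ E, e.1 = e'.1 → e = e') ∧
  (∀ e ∈ E, ∀ e' ∈ E, ∀ X, e.1 = Term.var X → ¬ Term.VarIn X e'.2)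

/-- The relation `X ≻_E Y`: for some equation `X = t` of `E`, `Y ∈ Var(t)`. -/
def succRel (E : EqSet F V) (X Y : V) : Prop := ∃ t, (Term.var X, t) ∈ E ∧ Term.VarIn Y t

/-- A semi-solved equation set: `X₁=t₁, …, Xₙ=tₙ` with `X₁,…,Xₙ` distinct variables,
no `tᵢ` equal to `Xᵢ`, and whenever `Xᵢ` occurs in some `tₖ` then `Xᵢ ≻⁺_E Xᵢ`. -/
def SemiSolved (E : EqSet F V) : Prop :=
  (∀ e ∈ E, ∃ X, e.1 = Term.var X) ∧
  (∀ e ∈ E, ∀ e' ∈ E, e.1 = e'.1 → e = e') ∧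
  (∀ e ∈ E, e.1 ≠ e.2) ∧
  (∀ X, (∃ e' ∈ E, Term.VarIn X e'.2) → (∃ t, (Term.var X, t) ∈ E) →
    Relation.TransGen (succRel E) X X)

/-- `σ` is the substitution represented by the (solved) equation set `E`. -/
def Represents (E : EqSet F V) (σ : Subst F V) : Prop :=
  ∀ v, (∃ t, (Term.var v, t) ∈ E ∧ σ v = t) ∨ ((∀ t, (Term.var v, t) ∉ E) ∧ σ v = Term.var v)

/-- There is an occur-check free run of MMA on `E`: a maximal run never performing
action (6), hence ending either by action (2) (failure on a clash) or with success
(no action applicable any more, the final set being solved). (MMA always terminates,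
so runs are finite.) -/
def ExistsOCFreeRun [DecidableEq V] (E : EqSet F V) : Prop :=
  ∃ E', MMAReach E E' ∧ (Clash E' ∨ SolvedSet E')

/-- `u` is obtained from `s` by replacing *some* of the occurrences of the variable `X`
by the term `t`. -/
inductive ReplSome [DecidableEq V] (X : V) (t : Term F V) : Term F V → Term F V → Prop
  | keep (v : V) : ReplSome X t (Term.var v) (Term.var v)
  | repl : ReplSome X t (Term.var X) t
  | app {f : F} {ss ts : List (Term F V)} :
      List.Forall₂ (ReplSome X t) ss ts → ReplSome X t (Term.app f ss) (Term.app f ts)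

def ReplSomeEqn [DecidableEq V] (X : V) (t : Term F V) (e e' : Eqn F V) : Prop :=
  ReplSome X t e.1 e'.1 ∧ ReplSome X t e.2 e'.2

/-- The labels of the actions of MMA⁻. -/
inductive MLabel (F V : Type) where
  | decomp | del | orient
  | elim (X : V) (t : Term F V)
  | elim' (X : V) (t : Term F V)

/-- A configuration of MMA⁻: the current equation set together with the set of
variables on which action (5) has already been performed. -/
abbrev MState (F V : Type) := EqSet F V × Set V

/-- A (non-failing) step of MMA⁻, labelled by the action used: actions (1), (3), (4),
(5) (with condition `X ≠ t` instead of the occur-check `X ∉ Var(t)`), and (5')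
(replacing some occurrences of `X` by `t` in the other equations, allowed only if
action (5) has previously been performed on an equation with left-hand side `X`). -/
inductive MMStepL [DecidableEq V] : MLabel F V → MState F V → MState F V → Prop
  | decomp {E : EqSet F V} {H : Set V} {f : F} {ss ts : List (Term F V)} :
      (Term.app f ss, Term.app f ts) ∈ E → ss.length = ts.length →
      MMStepL MLabel.decomp (E, H)
        ((E \ {(Term.app f ss, Term.app f ts)}) ∪ {e | e ∈ ss.zip ts}, H)
  | del {E : EqSet F V} {H : Set V} {X : V} : (Term.var X, Term.var X) ∈ E →
      MMStepL MLabel.del (E, H) (E \ {(Term.var X, Term.var X)}, H)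
  | orient {E : EqSet F V} {H : Set V} {X : V} {t : Term F V} :
      (t, Term.var X) ∈ E → ¬ t.IsVar →
      MMStepL MLabel.orient (E, H) ((E \ {(t, Term.var X)}) ∪ {(Term.var X, t)}, H)
  | elim {E : EqSet F V} {H : Set V} {X : V} {t : Term F V} :
      (Term.var X, t) ∈ E → Term.var X ≠ t →
      occursElsewhere X (Term.var X, t) E →
      MMStepL (MLabel.elim X t) (E, H)
        (insert (Term.var X, t) (Eqn.subst (subst1 X t) '' (E \ {(Term.var X, t)})),
         insert X H)
  | elim' {E : EqSet F V} {H : Set V} {X : V} {t : Term F V} {g : Eqn F V → Eqn F V} :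
      (Term.var X, t) ∈ E → Term.var X ≠ t →
      occursElsewhere X (Term.var X, t) E → X ∈ H →
      (∀ e ∈ E \ {(Term.var X, t)}, ReplSomeEqn X t e (g e)) →
      MMStepL (MLabel.elim' X t) (E, H)
        (insert (Term.var X, t) (g '' (E \ {(Term.var X, t)})), H)

/-- A (non-failing) step of MMA⁻. -/
def MMStep [DecidableEq V] (s s' : MState F V) : Prop := ∃ l, MMStepL l s s'

/-- Reachability by (non-failing) steps of MMA⁻. A run of MMA⁻ on an equation set `E`
starts in the configuration `(E, ∅)`; it terminates with failure when action (2) is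
performed (a clash is present), and it may terminate with success when the current
equation set is semi-solved. -/
def MMReach [DecidableEq V] (s s' : MState F V) : Prop := Relation.ReflTransGen MMStep s s'

/-! Every action replaces some equations by others that a substitution `θ` unifies exactly when
it unifies the replaced ones. For (1) this is injectivity of `f(…)` in its arguments. For (5)
and (5'), any unifier `θ` of the equation `X = t` that stays in the set satisfies `Xθ = tθ`, so
replacing occurrences of `X` by `t` (all of them or only some) does not change `sθ` for any
term `s`. -/

namespace Term

theorem subst_var (σ : Subst F V) (x : V) : (var x).subst σ = σ x := by
  simp only [subst]

theorem subst_app (σ : Subst F V) (f : F) (ts : List (Term F V)) :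
    (app f ts).subst σ = app f (ts.map (subst σ)) := by
  simp only [subst, List.attach_map_val]

theorem subst_subst (σ θ : Subst F V) :
    ∀ s : Term F V, (s.subst σ).subst θ = s.subst (σ.comp θ)
  | var x => by simp only [subst_var, Subst.comp]
  | app f ts => by
    simp only [subst_app, List.map_map]
    exact congrArg (app f) (List.map_congr_left fun t _ => subst_subst σ θ t)

theorem subst_subst1_subst [DecidableEq V] {X : V} {t : Term F V} {θ : Subst F V}
    (hX : θ X = t.subst θ) (s : Term F V) : (s.subst (subst1 X t)).subst θ = s.subst θ := by
  rw [subst_subst]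
  congr 1
  funext v
  by_cases hv : v = X
  · simp only [Subst.comp, subst1, hv, if_true, hX]
  · simp only [Subst.comp, subst1, hv, if_false, subst_var]

end Term

mutual

theorem ReplSome.subst_eq_subst [DecidableEq V] {X : V} {t s u : Term F V} {θ : Subst F V}
    (hX : θ X = t.subst θ) : ReplSome X t s u → s.subst θ = u.subst θ
  | .keep _ => rfl
  | .repl => by rwa [Term.subst_var]
  | .app hs => by rw [Term.subst_app, Term.subst_app, ReplSome.map_subst_eq_map_subst hX hs]

theorem ReplSome.map_subst_eq_map_subst [DecidableEq V] {X : V} {t : Term F V}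
    {ss us : List (Term F V)} {θ : Subst F V} (hX : θ X = t.subst θ) :
    List.Forall₂ (ReplSome X t) ss us → ss.map (Term.subst θ) = us.map (Term.subst θ)
  | .nil => rfl
  | .cons h hs => by
    rw [List.map_cons, List.map_cons, ReplSome.subst_eq_subst hX h,
      ReplSome.map_subst_eq_map_subst hX hs]

end

theorem List.map_eq_map_iff_forall_mem_zip {α β : Type*} {f : α → β} {l₁ l₂ : List α}
    (h : l₁.length = l₂.length) :
    l₁.map f = l₂.map f ↔ ∀ p ∈ l₁.zip l₂, f p.1 = f p.2 := by
  rw [← List.forall₂_eq_eq_eq, List.forall₂_map_left_iff, List.forall₂_map_right_iff,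
    List.forall₂_iff_zip]
  simp [h]

theorem isUnifierPair_app_iff {θ : Subst F V} {f : F} {ss ts : List (Term F V)}
    (h : ss.length = ts.length) :
    IsUnifierPair θ (.app f ss) (.app f ts) ↔ IsUnifier θ {e | e ∈ ss.zip ts} := by
  rw [IsUnifierPair, Term.subst_app, Term.subst_app, Term.app.injEq, eq_self, true_and,
    List.map_eq_map_iff_forall_mem_zip h]
  rfl

section IsUnifier

variable {θ : Subst F V} {e : Eqn F V} {E R : EqSet F V}

theorem isUnifier_union : IsUnifier θ (E ∪ R) ↔ IsUnifier θ E ∧ IsUnifier θ R :=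
  forall₂_or_left

theorem isUnifier_insert :
    IsUnifier θ (insert e E) ↔ IsUnifierPair θ e.1 e.2 ∧ IsUnifier θ E :=
  Set.forall_mem_insert

theorem isUnifier_singleton : IsUnifier θ {e} ↔ IsUnifierPair θ e.1 e.2 :=
  forall_eq

theorem isUnifier_iff_of_mem (he : e ∈ E) :
    IsUnifier θ E ↔ IsUnifierPair θ e.1 e.2 ∧ IsUnifier θ (E \ {e}) := by
  rw [← isUnifier_insert, Set.insert_sdiff_singleton, Set.insert_eq_of_mem he]

theorem isUnifier_image_iff {g : Eqn F V → Eqn F V}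
    (hg : ∀ e ∈ E, IsUnifierPair θ (g e).1 (g e).2 ↔ IsUnifierPair θ e.1 e.2) :
    IsUnifier θ (g '' E) ↔ IsUnifier θ E := by
  rw [IsUnifier, Set.forall_mem_image]
  exact forall₂_congr hg

theorem isUnifier_diff_singleton_union_iff (he : e ∈ E)
    (hR : IsUnifierPair θ e.1 e.2 ↔ IsUnifier θ R) :
    IsUnifier θ (E \ {e} ∪ R) ↔ IsUnifier θ E := by
  rw [isUnifier_union, isUnifier_iff_of_mem he, hR, and_comm]

theorem isUnifier_insert_image_diff_iff {g : Eqn F V → Eqn F V} (he : e ∈ E)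
    (hg : IsUnifierPair θ e.1 e.2 →
      ∀ e' ∈ E \ {e}, IsUnifierPair θ (g e').1 (g e').2 ↔ IsUnifierPair θ e'.1 e'.2) :
    IsUnifier θ (insert e (g '' (E \ {e}))) ↔ IsUnifier θ E := by
  rw [isUnifier_insert, isUnifier_iff_of_mem he]
  exact and_congr_right fun hθ => isUnifier_image_iff (hg hθ)

end IsUnifier

/-- Each action of MMA⁻ (actions (1), (3), (4), (5), (5')) preserves
the set of unifiers: `θ` is a unifier of the equation set before the step iff it is a
unifier of the equation set after the step. -/
theorem stmt9 {F V : Type} [DecidableEq V] (l : MLabel F V) (s s' : MState F V)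
    (h : MMStepL l s s') (θ : Subst F V) :
    IsUnifier θ s.1 ↔ IsUnifier θ s'.1 := by
  cases h with
  | decomp hmem hlen =>
    exact (isUnifier_diff_singleton_union_iff hmem (isUnifierPair_app_iff hlen)).symm
  | del hmem => exact (isUnifier_iff_of_mem hmem).trans (and_iff_right rfl)
  | orient hmem _ =>
    refine (isUnifier_diff_singleton_union_iff hmem ?_).symm
    rw [isUnifier_singleton]
    exact eq_comm
  | elim hmem _ _ =>
    refine (isUnifier_insert_image_diff_iff hmem fun hX _ _ => ?_).symm
    rw [IsUnifierPair, Term.subst_var] at hX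
    simp only [IsUnifierPair, Eqn.subst, Term.subst_subst1_subst hX]
  | elim' hmem _ _ _ hg =>
    refine (isUnifier_insert_image_diff_iff hmem fun hX e he => ?_).symm
    rw [IsUnifierPair, Term.subst_var] at hX
    obtain ⟨h₁, h₂⟩ := hg e he
    rw [IsUnifierPair, IsUnifierPair, h₁.subst_eq_subst hX, h₂.subst_eq_subst hX]
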